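/- (Corollary, part (ii)) Let p ≥ 1 and let (a_n)_{n≥1} be the positive integer sequence defined by a_1 = a_2 = a_3 = a_4 = 1 and a_{n+4} = (a_{n+3}^p·a_{n+1}^p + a_{n+2}^2)/a_n. Let b_1, b_2, b_3, b_4 be arbitrary integers and define rational numbers b_n for n ≥ 5 by b_{n+4} = (p·a_{n+3}^{p−1}·a_{n+1}^p·b_{n+3} + p·a_{n+3}^p·a_{n+1}^{p−1}·b_{n+1} + 2·a_{n+2}·b_{n+2} + a_{n+3}^p·a_{n+1}^p − a_{n+4}·b_n)/a_n. Then b_n is an integer for every n ≥ 1. -/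

import Mathlib

/-!
Put `A n = a n + b n ε` in the dual numbers `ℚ[ε]`. The two recurrences together say
`A (n + 4) * A n = (1 + ε) * A (n + 3) ^ p * A (n + 1) ^ p + A (n + 2) ^ 2`, and `1 + ε` is a unit
of `ℤ[ε]`, so the Laurent-phenomenon argument for Somos-4 runs in the ring `ℤ[ε]`: by induction
every `A n` lies in `ℤ[ε]` and is coprime to its three predecessors, and reducing the four
relations that produce `A (n + 4), …, A (n + 7)` modulo `A (n + 4)` shows that the division
defining `A (n + 8)` is exact. The integrality of `b n` is then that of the `ε`-part of `A n`.
-/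

section Somos4

variable {R : Type*} [CommRing R] {p : ℕ}

-- The hypotheses are the relations of `dvd_somos4_of_isCoprime` read modulo `u₄`.
theorem somos4_mul_eq_zero {c x₁ x₂ x₃ x₅ x₆ x₇ : R}
    (h₄ : c * (x₃ ^ p * x₁ ^ p) + x₂ ^ 2 = 0) (h₅ : x₅ * x₁ = x₃ ^ 2)
    (h₆ : x₆ * x₂ = c * (x₅ ^ p * x₃ ^ p)) (h₇ : x₇ * x₃ = x₅ ^ 2) :
    c * (x₃ ^ p * x₁ ^ p) * x₂ ^ 2 * (c * (x₇ ^ p * x₅ ^ p) + x₆ ^ 2) = 0 := by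
  have h₅p : x₅ ^ p * x₁ ^ p = (x₃ ^ p) ^ 2 := by rw [← mul_pow, h₅, ← pow_mul, ← pow_mul, mul_comm]
  have h₇p : x₇ ^ p * x₃ ^ p = (x₅ ^ p) ^ 2 := by rw [← mul_pow, h₇, ← pow_mul, ← pow_mul, mul_comm]
  linear_combination (c ^ 2 * x₂ ^ 2 * (x₅ ^ p * x₁ ^ p)) * h₇p
    + (c ^ 2 * x₂ ^ 2 * (x₅ ^ p) ^ 2) * h₅p
    + (c * (x₃ ^ p * x₁ ^ p) * (x₆ * x₂ + c * (x₅ ^ p * x₃ ^ p))) * h₆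
    + (c ^ 2 * (x₅ ^ p) ^ 2 * (x₃ ^ p) ^ 2) * h₄

theorem dvd_somos4_of_isCoprime (hp : p ≠ 0) {c u₀ u₁ u₂ u₃ u₄ u₅ u₆ u₇ : R}
    (e₄ : u₄ * u₀ = c * (u₃ ^ p * u₁ ^ p) + u₂ ^ 2)
    (e₅ : u₅ * u₁ = c * (u₄ ^ p * u₂ ^ p) + u₃ ^ 2)
    (e₆ : u₆ * u₂ = c * (u₅ ^ p * u₃ ^ p) + u₄ ^ 2)
    (e₇ : u₇ * u₃ = c * (u₆ ^ p * u₄ ^ p) + u₅ ^ 2)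
    (hc : IsCoprime c u₄) (h₁ : IsCoprime u₁ u₄) (h₂ : IsCoprime u₂ u₄) (h₃ : IsCoprime u₃ u₄) :
    u₄ ∣ c * (u₇ ^ p * u₅ ^ p) + u₆ ^ 2 := by
  have hcop : IsCoprime u₄ (c * (u₃ ^ p * u₁ ^ p) * u₂ ^ 2) :=
    ((hc.mul_left (h₃.pow_left.mul_left h₁.pow_left)).mul_left h₂.pow_left).symm
  refine hcop.dvd_of_dvd_mul_left ?_
  rw [← Ideal.Quotient.eq_zero_iff_dvd]
  set π := Ideal.Quotient.mk (Ideal.span {u₄})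
  have h₀ : π u₄ = 0 := (Ideal.Quotient.eq_zero_iff_dvd _ _).2 dvd_rfl
  have t₄ := congrArg π e₄
  have t₅ := congrArg π e₅
  have t₆ := congrArg π e₆
  have t₇ := congrArg π e₇
  simp only [map_mul, map_add, map_pow, h₀, zero_mul, zero_pow hp, zero_pow two_ne_zero,
    mul_zero, zero_add, add_zero] at t₄ t₅ t₆ t₇ ⊢
  exact somos4_mul_eq_zero t₄.symm t₅ t₆ t₇

theorem IsCoprime.of_mul_eq_add_mul {x y z u t : R} (h : IsCoprime x u) (e : y * z = x + u * t) :
    IsCoprime y u :=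
  ((h.add_mul_left_left t).symm.of_isCoprime_of_dvd_right ⟨z, e.symm⟩).symm

theorem somos4_isCoprime (hp : p ≠ 0) {c u₀ u₁ u₂ u₃ u₄ : R}
    (e : u₄ * u₀ = c * (u₃ ^ p * u₁ ^ p) + u₂ ^ 2) (hc : IsCoprime c u₂)
    (h₁₂ : IsCoprime u₁ u₂) (h₂₃ : IsCoprime u₂ u₃) :
    IsCoprime u₁ u₄ ∧ IsCoprime u₂ u₄ ∧ IsCoprime u₃ u₄ := by
  obtain ⟨q, rfl⟩ : ∃ q, p = q + 1 := ⟨p - 1, by omega⟩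
  have h₁ : IsCoprime u₄ u₁ := (h₁₂.symm.pow_left (m := 2)).of_mul_eq_add_mul (z := u₀)
    (t := c * u₃ ^ (q + 1) * u₁ ^ q) (by linear_combination e)
  have h₂ : IsCoprime u₄ u₂ := (hc.mul_left ((h₂₃.symm.pow_left (m := q + 1)).mul_left
    (h₁₂.pow_left (m := q + 1)))).of_mul_eq_add_mul (z := u₀) (t := u₂) (by linear_combination e)
  have h₃ : IsCoprime u₄ u₃ := (h₂₃.pow_left (m := 2)).of_mul_eq_add_mul (z := u₀)
    (t := c * u₃ ^ q * u₁ ^ (q + 1)) (by linear_combination e)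
  exact ⟨h₁.symm, h₂.symm, h₃.symm⟩

theorem dvd_somos4 (hp : p ≠ 0) {c : R} (hc : IsUnit c) {u : ℕ → R} {k : ℕ}
    (hinit : ∀ n < 4, IsUnit (u n))
    (hrec : ∀ n < k, u (n + 4) * u n = c * (u (n + 3) ^ p * u (n + 1) ^ p) + u (n + 2) ^ 2)
    (hcop : ∀ j < k, k < j + 4 → IsCoprime (u j) (u k)) :
    u k ∣ c * (u (k + 3) ^ p * u (k + 1) ^ p) + u (k + 2) ^ 2 := by
  rcases lt_or_ge k 4 with hk | hk
  · exact (hinit k hk).dvd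
  obtain ⟨j, rfl⟩ : ∃ j, k = j + 4 := ⟨k - 4, by omega⟩
  exact dvd_somos4_of_isCoprime hp (hrec j (by omega)) (hrec (j + 1) (by omega))
    (hrec (j + 2) (by omega)) (hrec (j + 3) (by omega))
    (isCoprime_one_left.of_isCoprime_of_dvd_left hc.dvd)
    (hcop (j + 1) (by omega) (by omega)) (hcop (j + 2) (by omega) (by omega))
    (hcop (j + 3) (by omega) (by omega))

theorem RingHom.mem_range_of_dvd {K : Type*} [CommRing K] (ι : R →+* K) {x z : R} {y : K}
    (hx : ι x ∈ nonZeroDivisors K) (hxz : x ∣ z) (h : ι x * y = ι z) : y ∈ ι.range := by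
  obtain ⟨w, rfl⟩ := hxz
  exact ⟨w, (mul_cancel_left_mem_nonZeroDivisors hx).1 (by rw [← map_mul, h])⟩

theorem somos4_mem_range {K : Type*} [CommRing K] {ι : R →+* K} (hι : Function.Injective ι)
    (hp : p ≠ 0) {c : R} (hc : IsUnit c) {v : ℕ → K} (hv : ∀ n, v n ∈ nonZeroDivisors K)
    (hinit : ∀ n < 4, ∃ x, IsUnit x ∧ ι x = v n)
    (hrec : ∀ n, v (n + 4) * v n = ι c * (v (n + 3) ^ p * v (n + 1) ^ p) + v (n + 2) ^ 2)
    (n : ℕ) : v n ∈ ι.range := by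
  set u : ℕ → R := fun n => Function.invFun ι (v n)
  have u_of_lift {n x} (hx : ι x = v n) : u n = x :=
    hι ((Function.invFun_eq ⟨x, hx⟩).trans hx.symm)
  have u_init (n) (hn : n < 4) : IsUnit (u n) := by
    obtain ⟨x, hx, hxv⟩ := hinit n hn
    rwa [u_of_lift hxv]
  have u_rec {n} (h : ∀ i ≤ n + 4, ι (u i) = v i) :
      u (n + 4) * u n = c * (u (n + 3) ^ p * u (n + 1) ^ p) + u (n + 2) ^ 2 := by
    apply hι
    simp only [map_mul, map_add, map_pow]
    rw [h n (by omega), h (n + 1) (by omega), h (n + 2) (by omega), h (n + 3) (by omega),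
      h (n + 4) le_rfl, hrec]
  -- Coprimality of each term with its three predecessors is what keeps the divisions exact.
  suffices H : ∀ n, ι (u n) = v n ∧ ∀ j < n, n < j + 4 → IsCoprime (u j) (u n) from
    ⟨u n, (H n).1⟩
  intro n
  induction n using Nat.strong_induction_on with
  | _ n ih =>
  rcases lt_or_ge n 4 with hn | hn
  · obtain ⟨x, -, hxv⟩ := hinit n hn
    exact ⟨u_of_lift hxv ▸ hxv, fun j _ _ =>
      isCoprime_one_right.of_isCoprime_of_dvd_right (u_init n hn).dvd⟩
  obtain ⟨k, rfl⟩ : ∃ k, n = k + 4 := ⟨n - 4, by omega⟩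
  have lift {i} (hi : i < k + 4) : ι (u i) = v i := (ih i hi).1
  have hdvd := dvd_somos4 hp hc u_init (fun m hm => u_rec fun i hi => lift (by omega))
    (ih k (by omega)).2
  have hlift : ι (u (k + 4)) = v (k + 4) :=
    Function.invFun_eq (ι.mem_range_of_dvd (lift (i := k) (by omega) ▸ hv k) hdvd (by
      simp only [map_mul, map_add, map_pow]
      rw [lift (by omega), lift (by omega), lift (by omega), lift (by omega), mul_comm, hrec]))
  have e := u_rec (n := k) fun i hi => (Nat.lt_or_eq_of_le hi).elim lift (· ▸ hlift)
  obtain ⟨h₁, h₂, h₃⟩ := somos4_isCoprime hp e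
    (isCoprime_one_left.of_isCoprime_of_dvd_left hc.dvd)
    ((ih (k + 2) (by omega)).2 (k + 1) (by omega) (by omega))
    ((ih (k + 3) (by omega)).2 (k + 2) (by omega) (by omega))
  refine ⟨hlift, fun i hi hi' => ?_⟩
  obtain rfl | rfl | rfl : i = k + 1 ∨ i = k + 2 ∨ i = k + 3 := by omega
  exacts [h₁, h₂, h₃]

end Somos4

namespace DualNumber

open TrivSqZeroExt

variable {A B : Type*} [CommSemiring A] [CommSemiring B]

def mapRingHom (f : A →+* B) : A[ε] →+* B[ε] where
  toFun x := inl (f x.fst) + inr (f x.snd)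
  map_one' := by ext <;> simp
  map_mul' x y := by ext <;> simp [add_comm]
  map_zero' := by ext <;> simp
  map_add' x y := by ext <;> simp

@[simp] theorem fst_mapRingHom (f : A →+* B) (x : A[ε]) : (mapRingHom f x).fst = f x.fst := by
  simp [mapRingHom]

@[simp] theorem snd_mapRingHom (f : A →+* B) (x : A[ε]) : (mapRingHom f x).snd = f x.snd := by
  simp [mapRingHom]

theorem mapRingHom_injective {f : A →+* B} (hf : Function.Injective f) :
    Function.Injective (mapRingHom f) := fun x y h =>
  TrivSqZeroExt.ext (hf <| by simpa using congr(($h).fst)) (hf <| by simpa using congr(($h).snd))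

@[simp] theorem mapRingHom_eps (f : A →+* B) : mapRingHom f ε = ε := by ext <;> simp

theorem mul_eq_somos4 {F : Type*} [Field F] (p : ℕ) {u w x y z : F[ε]} (hu : u.fst ≠ 0)
    (hfst : w.fst = (x.fst ^ p * y.fst ^ p + z.fst ^ 2) / u.fst)
    (hsnd : w.snd = (p * x.fst ^ (p - 1) * y.fst ^ p * x.snd + p * x.fst ^ p * y.fst ^ (p - 1) * y.snd
      + 2 * z.fst * z.snd + x.fst ^ p * y.fst ^ p - w.fst * u.snd) / u.fst) :
    w * u = (1 + ε) * (x ^ p * y ^ p) + z ^ 2 := by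
  rw [eq_div_iff hu] at hfst hsnd
  ext
  · simp only [fst_mul, fst_add, fst_one, fst_eps, add_zero, fst_pow, one_mul]
    linear_combination hfst
  · simp only [snd_mul, smul_eq_mul, snd_add, fst_add, fst_one, fst_eps, add_zero, fst_pow,
      snd_pow, Nat.pred_eq_sub_one, nsmul_eq_mul, one_mul, fst_mul, snd_one, snd_eps, zero_add]
    linear_combination hsnd

end DualNumber

theorem somos4_pos {F : Type*} [Semifield F] [LinearOrder F] [IsStrictOrderedRing F] {p : ℕ}
    {a : ℕ → F} (hinit : ∀ n < 4, 0 < a n)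
    (hrec : ∀ n, a (n + 4) = (a (n + 3) ^ p * a (n + 1) ^ p + a (n + 2) ^ 2) / a n) (n : ℕ) :
    0 < a n := by
  induction n using Nat.strong_induction_on with
  | _ n ih =>
  rcases lt_or_ge n 4 with hn | hn
  · exact hinit n hn
  obtain ⟨k, rfl⟩ : ∃ k, n = k + 4 := ⟨n - 4, by omega⟩
  have := ih k (by omega)
  have := ih (k + 1) (by omega)
  have := ih (k + 2) (by omega)
  have := ih (k + 3) (by omega)
  rw [hrec]
  positivity

open DualNumber TrivSqZeroExt in
/-- Corollary (ii): the extension of the non-homogeneous Somos-4 sequence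
with q = 2 obtained by deforming the first monomial is integer. -/
theorem nonhomogeneous_somos4_extension_ii_integer (p : ℕ) (hp : 1 ≤ p)
    (a : ℕ → ℚ)
    (h1 : a 1 = 1) (h2 : a 2 = 1) (h3 : a 3 = 1) (h4 : a 4 = 1)
    (hrec : ∀ n, 1 ≤ n →
      a (n + 4) = (a (n + 3) ^ p * a (n + 1) ^ p + a (n + 2) ^ 2) / a n)
    (b : ℕ → ℚ) (b1 b2 b3 b4 : ℤ)
    (hb1 : b 1 = (b1 : ℚ)) (hb2 : b 2 = (b2 : ℚ)) (hb3 : b 3 = (b3 : ℚ)) (hb4 : b 4 = (b4 : ℚ))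
    (hbrec : ∀ n, 1 ≤ n →
      b (n + 4) = ((p : ℚ) * a (n + 3) ^ (p - 1) * a (n + 1) ^ p * b (n + 3)
        + (p : ℚ) * a (n + 3) ^ p * a (n + 1) ^ (p - 1) * b (n + 1)
        + 2 * a (n + 2) * b (n + 2) + a (n + 3) ^ p * a (n + 1) ^ p
        - a (n + 4) * b n) / a n) :
    ∀ n, 1 ≤ n → ∃ k : ℤ, b n = (k : ℚ) := by
  set ι := mapRingHom (Int.castRingHom ℚ)
  set v : ℕ → ℚ[ε] := fun n => (a (n + 1), b (n + 1))
  have ha_pos : ∀ n, 0 < a (n + 1) := somos4_pos (a := fun n => a (n + 1))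
    (by intro n hn; interval_cases n <;> simp [h1, h2, h3, h4]) (fun n => hrec (n + 1) (by omega))
  have hinit (m : ℕ) (c : ℤ) (ha : a m = 1) (hb : b m = c) :
      ∃ x : ℤ[ε], IsUnit x ∧ ι x = (a m, b m) :=
    ⟨inl 1 + inr c, isUnit_iff_isUnit_fst.2 (by simp), by ext <;> simp [ι, ha, hb]⟩
  have hmem := somos4_mem_range (ι := ι) (p := p) (c := 1 + ε) (v := v)
    (mapRingHom_injective Int.cast_injective) (by omega)
    (isUnit_iff_isUnit_fst.2 (by simp))
    (fun n => ((isUnit_iff_isUnit_fst (x := v n)).2 (ha_pos n).ne'.isUnit).mem_nonZeroDivisors)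
    (by intro n hn; interval_cases n
        exacts [hinit 1 b1 h1 hb1, hinit 2 b2 h2 hb2, hinit 3 b3 h3 hb3, hinit 4 b4 h4 hb4])
    (fun n => by
      rw [map_add, map_one, mapRingHom_eps]
      exact mul_eq_somos4 p (u := v n) (w := v (n + 4)) (x := v (n + 3)) (y := v (n + 1))
        (z := v (n + 2)) (ha_pos n).ne' (hrec (n + 1) (by omega)) (hbrec (n + 1) (by omega)))
  intro n hn
  obtain ⟨m, rfl⟩ : ∃ m, n = m + 1 := ⟨n - 1, by omega⟩
  obtain ⟨x, hx⟩ := hmem m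
  exact ⟨x.snd, by simpa [ι, v] using congr(($hx).snd).symm⟩
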